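/- arXiv:2206.12153 — 4 statements merged into one kernel-verified Lean document; each statement's English description precedes it below -/
import Mathlib

section
/- Foata's correspondence is a bijection: the map sending a permutation π ∈ S_n in standard cycle notation (each cycle written with its largest element first, cycles listed in increasing order of their first elements) to the permutation obtained by erasing the cycle brackets (concatenating the cycles into one-line notation) is a bijection from S_n to S_n. -/
/-!
Injectivity is all there is to prove: the Foata word of `π` lists every letter exactly once,
so `π ↦ foataWord π` is a self-map of the finite set `S_n`. Each cycle block of the word is its
leader (the maximum of the cycle) followed by the maximal run of letters below that leader, since
the next block starts with a larger leader. Hence the word determines its blocks, and a block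
`[m, π m, π² m, …]` determines `π` on the cycle of `m`.
-/

/-- The cycle of `π` containing `x`, written starting at `x`:
`[x, π x, π² x, ..., π^{l-1} x]` where `l` is the length of the cycle. -/
noncomputable def cycleWord {n : ℕ} (π : Equiv.Perm (Fin n)) (x : Fin n) : List (Fin n) :=
  (List.range (Function.minimalPeriod π x)).map (fun j => (⇑π)^[j] x)

/-- The Foata word of `π`: write `π` in standard cycle notation (each cycle starting
with its largest element, cycles listed in increasing order of their first elements)
and erase the brackets. -/
noncomputable def foataWord {n : ℕ} (π : Equiv.Perm (Fin n)) : List (Fin n) :=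
  (((Finset.univ.filter
      (fun x : Fin n => ∀ j : Fin n, (⇑π)^[j.val] x ≤ x))).sort (· ≤ ·)).flatMap
    (cycleWord π)

namespace List

variable {α : Type*} [LinearOrder α]

def IsLedBy (m : α) (l : List α) : Prop :=
  ∃ t, l = m :: t ∧ ∀ a ∈ t, a < m

theorem takeWhile_lt_append_of_forall_lt {m : α} {t r : List α} (ht : ∀ a ∈ t, a < m)
    (hr : ∀ b ∈ r.head?, m ≤ b) : (t ++ r).takeWhile (· < m) = t := by
  rw [takeWhile_append_of_pos (by simpa using ht)]
  cases r with
  | nil => simp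
  | cons b r => simp [(hr b rfl).not_gt]

theorem le_of_mem_head?_flatMap {m : α} {M : List α} {w : α → List α}
    (hM : ∀ m' ∈ M, m < m') (hw : ∀ m' ∈ M, IsLedBy m' (w m')) :
    ∀ b ∈ (M.flatMap w).head?, m ≤ b := by
  cases M with
  | nil => simp
  | cons m' M =>
    obtain ⟨t, ht, -⟩ := hw m' mem_cons_self
    simpa [ht] using (hM m' mem_cons_self).le

theorem eq_of_flatMap_eq_of_isLedBy {w w' : α → List α} :
    ∀ {M M' : List α}, M.Pairwise (· < ·) → M'.Pairwise (· < ·) →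
      (∀ m ∈ M, IsLedBy m (w m)) → (∀ m ∈ M', IsLedBy m (w' m)) →
      M.flatMap w = M'.flatMap w' → M = M' ∧ ∀ m ∈ M, w m = w' m
  | [], [], _, _, _, _, _ => by simp
  | [], m' :: _, _, _, _, hw', h => by
    obtain ⟨t', ht', -⟩ := hw' m' mem_cons_self
    simp [ht'] at h
  | m :: _, [], _, _, hw, _, h => by
    obtain ⟨t, ht, -⟩ := hw m mem_cons_self
    simp [ht] at h
  | m :: M, m' :: M', hM, hM', hw, hw', h => by
    obtain ⟨t, ht, hlt⟩ := hw m mem_cons_self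
    obtain ⟨t', ht', hlt'⟩ := hw' m' mem_cons_self
    rw [flatMap_cons, flatMap_cons, ht, ht', cons_append, cons_append, cons.injEq] at h
    obtain ⟨rfl, h⟩ := h
    rw [pairwise_cons] at hM hM'
    have hwM : ∀ x ∈ M, IsLedBy x (w x) := fun x hx => hw x (mem_cons_of_mem _ hx)
    have hwM' : ∀ x ∈ M', IsLedBy x (w' x) := fun x hx => hw' x (mem_cons_of_mem _ hx)
    have htt' : t = t' := by
      rw [← takeWhile_lt_append_of_forall_lt hlt (le_of_mem_head?_flatMap hM.1 hwM), h,
        takeWhile_lt_append_of_forall_lt hlt' (le_of_mem_head?_flatMap hM'.1 hwM')]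
    subst htt'
    obtain ⟨rfl, hrest⟩ :=
      eq_of_flatMap_eq_of_isLedBy hM.2 hM'.2 hwM hwM' (append_cancel_left h)
    refine ⟨rfl, ?_⟩
    rintro x (_ | ⟨_, hx⟩)
    · rw [ht, ht']
    · exact hrest x hx

end List

theorem List.exists_perm_ofFn_eq {n : ℕ} {l : List (Fin n)} (hl : l.Nodup) (h : ∀ x, x ∈ l) :
    ∃ σ : Equiv.Perm (Fin n), List.ofFn σ = l := by
  let e := hl.getEquivOfForallMemList l h
  have hlen : l.length = n := by simpa using Fintype.card_congr e
  refine ⟨(finCongr hlen.symm).trans e, List.ext_getElem (by simp [hlen]) fun i _ _ => ?_⟩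
  simp [e, List.Nodup.getEquivOfForallMemList]

section

open Function List

variable {n : ℕ} (π : Equiv.Perm (Fin n))

theorem coe_cycleWord (x : Fin n) : (cycleWord π x : Cycle (Fin n)) = periodicOrbit π x := rfl

theorem mem_cycleWord_iff {x y : Fin n} : y ∈ cycleWord π x ↔ ∃ k, π^[k] x = y := by
  rw [← Cycle.mem_coe_iff, coe_cycleWord, mem_periodicOrbit_iff (π.injective.mem_periodicPts x)]

theorem mem_cycleWord_congr {x y z : Fin n} (hy : y ∈ cycleWord π x) :
    z ∈ cycleWord π y ↔ z ∈ cycleWord π x := by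
  obtain ⟨k, rfl⟩ := (mem_cycleWord_iff π).1 hy
  rw [← Cycle.mem_coe_iff, ← Cycle.mem_coe_iff, coe_cycleWord, coe_cycleWord,
    periodicOrbit_apply_iterate_eq (π.injective.mem_periodicPts x)]

theorem nodup_cycleWord (x : Fin n) : (cycleWord π x).Nodup :=
  Cycle.nodup_coe_iff.1 nodup_periodicOrbit

theorem exists_cycleWord_eq_cons (x : Fin n) : ∃ t, cycleWord π x = x :: t := by
  obtain ⟨k, hk⟩ := Nat.exists_eq_succ_of_ne_zero
    (minimalPeriod_pos_of_mem_periodicPts (π.injective.mem_periodicPts x)).ne'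
  exact ⟨_, by rw [cycleWord, hk, range_succ_eq_map, map_cons, iterate_zero_apply]⟩

theorem self_mem_cycleWord (x : Fin n) : x ∈ cycleWord π x := by
  obtain ⟨t, ht⟩ := exists_cycleWord_eq_cons π x
  exact ht ▸ mem_cons_self

theorem apply_getElem_cycleWord (x : Fin n) (j : ℕ) (hj : j < (cycleWord π x).length) :
    π (cycleWord π x)[j] = (cycleWord π x)[(j + 1) % (cycleWord π x).length]'
      (Nat.mod_lt _ (j.zero_le.trans_lt hj)) := by
  simp [cycleWord, ← iterate_succ_apply' π, iterate_mod_minimalPeriod_eq]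

theorem apply_eq_of_cycleWord_eq {π π' : Equiv.Perm (Fin n)} {m x : Fin n}
    (h : cycleWord π m = cycleWord π' m) (hx : x ∈ cycleWord π m) : π x = π' x := by
  obtain ⟨j, hj, rfl⟩ := getElem_of_mem hx
  have h' := apply_getElem_cycleWord π' m j (h ▸ hj)
  simp only [← h] at h'
  rw [apply_getElem_cycleWord, h']

theorem forall_iterate_le_iff_forall_mem_cycleWord {m : Fin n} :
    (∀ j : Fin n, π^[j] m ≤ m) ↔ ∀ y ∈ cycleWord π m, y ≤ m := by
  refine ⟨fun h y hy => ?_, fun h j => h _ ((mem_cycleWord_iff π).2 ⟨j, rfl⟩)⟩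
  simp only [cycleWord, mem_map, mem_range] at hy
  obtain ⟨j, hj, rfl⟩ := hy
  exact h ⟨j, hj.trans_le (minimalPeriod_le_card.trans_eq (Fintype.card_fin n))⟩

noncomputable def cycleLeaders : Finset (Fin n) :=
  Finset.univ.filter fun m => ∀ y ∈ cycleWord π m, y ≤ m

theorem foataWord_eq_flatMap_cycleLeaders :
    foataWord π = ((cycleLeaders π).sort (· ≤ ·)).flatMap (cycleWord π) := by
  simp only [foataWord, cycleLeaders, forall_iterate_le_iff_forall_mem_cycleWord]

theorem isLedBy_cycleWord {m : Fin n} (hm : m ∈ cycleLeaders π) :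
    (cycleWord π m).IsLedBy m := by
  obtain ⟨t, ht⟩ := exists_cycleWord_eq_cons π m
  have hnd := nodup_cycleWord π m
  rw [ht, nodup_cons] at hnd
  refine ⟨t, ht, fun a ha => lt_of_le_of_ne ?_ fun ham => hnd.1 (ham ▸ ha)⟩
  exact (Finset.mem_filter.1 hm).2 a (ht ▸ mem_cons_of_mem _ ha)

theorem exists_mem_cycleLeaders (x : Fin n) : ∃ m ∈ cycleLeaders π, x ∈ cycleWord π m := by
  obtain ⟨m, hm, hmax⟩ := (cycleWord π x).toFinset.exists_max_image id
    ⟨x, mem_toFinset.2 (self_mem_cycleWord π x)⟩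
  rw [mem_toFinset] at hm
  refine ⟨m, Finset.mem_filter.2 ⟨Finset.mem_univ m, fun y hy => ?_⟩, ?_⟩
  · exact hmax y (mem_toFinset.2 ((mem_cycleWord_congr π hm).1 hy))
  · exact (mem_cycleWord_congr π hm).2 (self_mem_cycleWord π x)

theorem le_of_mem_cycleLeaders_of_mem_cycleWord {a b y : Fin n} (ha : a ∈ cycleLeaders π)
    (hya : y ∈ cycleWord π a) (hyb : y ∈ cycleWord π b) : b ≤ a := by
  refine (Finset.mem_filter.1 ha).2 b ?_
  rw [← mem_cycleWord_congr π hya, mem_cycleWord_congr π hyb]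
  exact self_mem_cycleWord π b

theorem nodup_foataWord : (foataWord π).Nodup := by
  rw [foataWord_eq_flatMap_cycleLeaders]
  refine nodup_flatMap.2 ⟨fun m _ => nodup_cycleWord π m, ?_⟩
  refine (Finset.sort_nodup _ _).imp_of_mem fun ha hb hab y hya hyb => hab ?_
  rw [Finset.mem_sort] at ha hb
  exact le_antisymm (le_of_mem_cycleLeaders_of_mem_cycleWord π hb hyb hya)
    (le_of_mem_cycleLeaders_of_mem_cycleWord π ha hya hyb)

theorem mem_foataWord (x : Fin n) : x ∈ foataWord π := by
  obtain ⟨m, hm, hx⟩ := exists_mem_cycleLeaders π x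
  rw [foataWord_eq_flatMap_cycleLeaders]
  exact mem_flatMap.2 ⟨m, (Finset.mem_sort _).2 hm, hx⟩

theorem foataWord_injective : Injective (foataWord (n := n)) := by
  intro π π' h
  rw [foataWord_eq_flatMap_cycleLeaders, foataWord_eq_flatMap_cycleLeaders] at h
  have hled (σ : Equiv.Perm (Fin n)) :
      ∀ m ∈ (cycleLeaders σ).sort (· ≤ ·), (cycleWord σ m).IsLedBy m :=
    fun m hm => isLedBy_cycleWord σ ((Finset.mem_sort _).1 hm)
  have hw := (eq_of_flatMap_eq_of_isLedBy (Finset.sortedLT_sort _).pairwise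
    (Finset.sortedLT_sort _).pairwise (hled π) (hled π') h).2
  ext x
  obtain ⟨m, hm, hx⟩ := exists_mem_cycleLeaders π x
  rw [apply_eq_of_cycleWord_eq (hw m ((Finset.mem_sort _).2 hm)) hx]

end

/-- Foata's correspondence is a bijection from `S_n` to `S_n`: every
permutation `τ` (given by its one-line notation `[τ 0, ..., τ (n-1)]`) is the
bracket-erased standard cycle notation of exactly one permutation `π`. -/
theorem foata_bijective (n : ℕ) (τ : Equiv.Perm (Fin n)) :
    ∃! π : Equiv.Perm (Fin n), foataWord π = List.ofFn ⇑τ := by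
  choose φ hφ using fun π : Equiv.Perm (Fin n) =>
    List.exists_perm_ofFn_eq (nodup_foataWord π) (mem_foataWord π)
  have hφ_inj : Function.Injective φ := fun π π' h =>
    foataWord_injective (by rw [← hφ, ← hφ, h])
  obtain ⟨π, rfl⟩ := Finite.injective_iff_surjective.1 hφ_inj τ
  exact ⟨π, (hφ π).symm, fun π' h => foataWord_injective (h.trans (hφ π))⟩
end

section
/- Under Foata's correspondence, the number of cycles of π equals the number of left-to-right maxima (increasing records) in the one-line notation of the image permutation. -/
/-- The number of cycles of `π`, fixed points counted as cycles of length one. -/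
def numCycles {n : ℕ} (π : Equiv.Perm (Fin n)) : ℕ :=
  π.cycleType.card + (Finset.univ.filter fun x => π x = x).card

/-- The number of left-to-right maxima (increasing records) of a word. -/
def lrMaxCount {n : ℕ} (w : List (Fin n)) : ℕ :=
  ((Finset.univ : Finset (Fin w.length)).filter
    (fun i => ∀ j : Fin w.length, j < i → w.get j < w.get i)).card

/-!
Write each cycle from its maximum, its leader. In the Foata word the leader of a cycle is a
record: leaders increase from cycle to cycle, and every letter of an earlier cycle is at most that
cycle's leader. The other letters of the cycle lie below its own leader, so they are not records.
Hence the records are exactly the leaders, one per cycle.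
-/

open Finset Function

section Records

variable {α : Type*} [LinearOrder α]

/-- The threshold `b` stands for the maximum of a prefix already read, so that the records of a
concatenation can be counted block by block; `b = ⊥` gives all left-to-right maxima. -/
def recordsAbove (b : WithBot α) (w : List α) : ℕ :=
  #{i : Fin w.length | b < w.get i ∧ ∀ j < i, w.get j < w.get i}

theorem recordsAbove_cons (b : WithBot α) (a : α) (w : List α) :
    recordsAbove b (a :: w) = (if b < a then 1 else 0) + recordsAbove (max b a) w := by
  simp only [recordsAbove, card_filter]
  refine (Fin.sum_univ_succ (n := w.length) _).trans
    (congrArg₂ _ ?_ (sum_congr rfl fun i _ => ?_))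
  · simp
  · simp [Fin.forall_fin_succ, and_assoc, and_left_comm]

theorem recordsAbove_append_of_forall_le {b : WithBot α} {t : List α}
    (ht : ∀ y ∈ t, (y : WithBot α) ≤ b) (w : List α) :
    recordsAbove b (t ++ w) = recordsAbove b w := by
  induction t with
  | nil => rfl
  | cons y t ih =>
    rw [List.forall_mem_cons] at ht
    rw [List.cons_append, recordsAbove_cons, if_neg ht.1.not_gt, max_eq_left ht.1, ih ht.2,
      zero_add]

theorem recordsAbove_flatMap {L : List α} (hL : L.Pairwise (· < ·)) {g : α → List α}
    (hg : ∀ x ∈ L, ∃ t, g x = x :: t ∧ ∀ y ∈ t, y < x) {b : WithBot α}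
    (hb : ∀ x ∈ L, b < x) :
    recordsAbove b (L.flatMap g) = L.length := by
  induction L generalizing b with
  | nil => rfl
  | cons x L ih =>
    obtain ⟨t, hgx, ht⟩ := hg x List.mem_cons_self
    have hbx := hb x List.mem_cons_self
    rw [List.pairwise_cons] at hL
    rw [List.flatMap_cons, hgx, List.cons_append, recordsAbove_cons, if_pos hbx,
      max_eq_right hbx.le,
      recordsAbove_append_of_forall_le (fun y hy => WithBot.coe_le_coe.2 (ht y hy).le),
      ih hL.2 (fun y hy => hg y (List.mem_cons_of_mem x hy))
        (fun y hy => WithBot.coe_lt_coe.2 (hL.1 y hy)),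
      List.length_cons, add_comm]

theorem lrMaxCount_eq_recordsAbove_bot {n : ℕ} (w : List (Fin n)) :
    lrMaxCount w = recordsAbove ⊥ w := by
  simp [lrMaxCount, recordsAbove]

end Records

namespace Equiv.Perm

variable {α : Type*} [LinearOrder α]

/-- The leaders of the cycles in Foata's standard cycle notation. -/
def IsCycleMax (π : Perm α) (x : α) : Prop :=
  ∀ y, π.SameCycle x y → y ≤ x

theorem IsCycleMax.eq_of_sameCycle {π : Perm α} {x y : α} (hx : π.IsCycleMax x)
    (hy : π.IsCycleMax y) (h : π.SameCycle x y) : x = y :=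
  le_antisymm (hy x h.symm) (hx y h)

theorem isCycleMax_of_isFixedPt {π : Perm α} {x : α} (h : IsFixedPt π x) : π.IsCycleMax x :=
  fun _ hxy => (hxy.eq_of_left h).ge

theorem exists_isCycleMax_cycleOf_eq [Fintype α] {π c : Perm α}
    (hc : c ∈ π.cycleFactorsFinset) :
    ∃ x, π.IsCycleMax x ∧ x ∈ π.support ∧ π.cycleOf x = c := by
  have hne : c.support.Nonempty := (mem_cycleFactorsFinset_iff.1 hc).1.nonempty_support
  set x := c.support.max' hne
  have hcx : c = π.cycleOf x := cycle_is_cycleOf (c.support.max'_mem hne) hc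
  have hx : x ∈ π.support := cycleOf_mem_cycleFactorsFinset_iff.1 (hcx ▸ hc)
  refine ⟨x, fun y hxy => c.support.le_max' y ?_, hx, hcx.symm⟩
  rw [hcx]
  exact mem_support_cycleOf_iff.2 ⟨hxy, hx⟩

theorem card_cycleType_add_card_fixed_eq_card_isCycleMax [Fintype α] (π : Perm α)
    [DecidablePred π.IsCycleMax] :
    Multiset.card π.cycleType + #{x | π x = x} = #{x | π.IsCycleMax x} := by
  have hfixed : #{x | π x = x} = #{x ∈ {x | π.IsCycleMax x} | π x = x} := by
    refine congrArg card ((filter_filter _ _ _).trans (filter_congr fun x _ => ?_)).symm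
    exact ⟨And.right, fun h => ⟨isCycleMax_of_isFixedPt h, h⟩⟩
  have hmoved : #{x ∈ {x | π.IsCycleMax x} | ¬π x = x} = #π.cycleFactorsFinset := by
    refine card_bij (fun x _ => π.cycleOf x) (fun x hx => ?_) (fun x hx y hy hxy => ?_) ?_
    · simp only [mem_filter, mem_univ, true_and] at hx
      exact cycleOf_mem_cycleFactorsFinset_iff.2 (mem_support.2 hx.2)
    · simp only [mem_filter, mem_univ, true_and] at hx hy
      exact hx.1.eq_of_sameCycle hy.1
        ((sameCycle_iff_cycleOf_eq_of_mem_support (mem_support.2 hx.2)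
          (mem_support.2 hy.2)).2 hxy)
    · intro c hc
      obtain ⟨x, hx, hsupp, rfl⟩ := exists_isCycleMax_cycleOf_eq hc
      exact ⟨x, by simpa using ⟨hx, mem_support.1 hsupp⟩, rfl⟩
  rw [cycleType_def, Multiset.card_map, card_val, ← hmoved, hfixed, add_comm,
    card_filter_add_card_filter_not]

theorem forall_iterate_le_iff_isCycleMax {n : ℕ} (π : Perm (Fin n)) (x : Fin n) :
    (∀ j : Fin n, π^[j] x ≤ x) ↔ π.IsCycleMax x := by
  refine ⟨fun h y hxy => ?_, fun h j => h _ ?_⟩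
  · obtain ⟨i, rfl⟩ := hxy.exists_nat_pow_eq
    have hpos := minimalPeriod_pos_of_mem_periodicPts (π.injective.mem_periodicPts x)
    rw [← iterate_eq_pow, ← iterate_mod_minimalPeriod_eq]
    exact h ⟨_, (Nat.mod_lt i hpos).trans_le
      (minimalPeriod_le_card.trans_eq (Fintype.card_fin n))⟩
  · rw [iterate_eq_pow]
    exact sameCycle_pow_right.2 (SameCycle.refl _ _)

theorem exists_cycleWord_eq_cons {n : ℕ} {π : Perm (Fin n)} {x : Fin n}
    (hx : π.IsCycleMax x) :
    ∃ t, cycleWord π x = x :: t ∧ ∀ y ∈ t, y < x := by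
  obtain ⟨T, hT⟩ := Nat.exists_eq_succ_of_ne_zero
    (minimalPeriod_pos_of_mem_periodicPts (π.injective.mem_periodicPts x)).ne'
  refine ⟨(List.range T).map fun j => π^[j + 1] x, ?_, ?_⟩
  · rw [cycleWord, hT, List.range_succ_eq_map, List.map_cons, List.map_map]
    rfl
  · simp only [List.mem_map, List.mem_range]
    rintro _ ⟨j, hj, rfl⟩
    refine (hx _ ?_).lt_of_ne fun h =>
      not_isPeriodicPt_of_pos_of_lt_minimalPeriod j.succ_ne_zero (by omega) h
    rw [iterate_eq_pow]
    exact sameCycle_pow_right.2 (SameCycle.refl _ _)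

end Equiv.Perm

/-- Under Foata's correspondence, the number of cycles of `π` equals the
number of left-to-right maxima in the one-line notation of the image permutation. -/
theorem foata_cycles_eq_records (n : ℕ) (π : Equiv.Perm (Fin n)) :
    numCycles π = lrMaxCount (foataWord π) := by
  classical
  have hleaders : ∀ x ∈ ({x | ∀ j : Fin n, π^[j] x ≤ x} : Finset (Fin n)).sort (· ≤ ·),
      π.IsCycleMax x := fun x hx =>
    (Equiv.Perm.forall_iterate_le_iff_isCycleMax π x).1 (by simpa using hx)
  rw [lrMaxCount_eq_recordsAbove_bot, foataWord,
    recordsAbove_flatMap (sortedLT_sort _).pairwise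
      (fun x hx => Equiv.Perm.exists_cycleWord_eq_cons (hleaders x hx))
      (fun _ _ => WithBot.bot_lt_coe _),
    length_sort, numCycles, Equiv.Perm.card_cycleType_add_card_fixed_eq_card_isCycleMax]
  exact congrArg card
    (filter_congr fun x _ => (Equiv.Perm.forall_iterate_le_iff_isCycleMax π x).symm)
end

section
/- The Markov chain Π^H defined by double uniform insertion has transition probabilities P(Π^H_n = τ | Π^H_k = σ) = (k!/n!) · t(σ, τ) for all k ≤ n, σ ∈ S_k, τ ∈ S_n. -/
/-- `patFreq σ π` is the relative frequency `t(σ, π)` of the pattern `σ ∈ S_k` in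
`π ∈ S_n`: the fraction of `k`-element subsets of `[n]` (encoded as strictly increasing
maps) whose induced pattern equals `σ`; it is `0` when `k > n`. -/
def patFreq {k n : ℕ} (σ : Equiv.Perm (Fin k)) (π : Equiv.Perm (Fin n)) : ℚ :=
  (((Finset.univ : Finset (Fin k → Fin n)).filter
      (fun f => (∀ i j : Fin k, i < j → f i < f j) ∧
        (∀ i j : Fin k, σ i < σ j ↔ π (f i) < π (f j)))).card : ℚ) / (n.choose k)

/-- Insertion of the value `J` at position `I` into the permutation `π ∈ S_n`:
the resulting permutation `τ ∈ S_{n+1}` satisfies `τ I = J`, and on the remaining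
positions the values of `π` keep their relative order (positions `≥ I` are shifted right
and values `≥ J` are incremented). -/
def insertPerm {n : ℕ} (π : Equiv.Perm (Fin n)) (I J : Fin (n + 1)) :
    Equiv.Perm (Fin (n + 1)) :=
  ((finSuccEquiv' I).trans (Equiv.optionCongr π)).trans (finSuccEquiv' J).symm

/-- One-step transition probability of the double-insertion chain `Π^H`: insert a
uniform value `J` at a uniform position `I`, both on `[n+1]`, independently. -/
def pstepH {n : ℕ} (π : Equiv.Perm (Fin n)) (τ : Equiv.Perm (Fin (n + 1))) : ℚ :=
  (((Finset.univ : Finset (Fin (n + 1) × Fin (n + 1))).filter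
      (fun p => insertPerm π p.1 p.2 = τ)).card : ℚ) / ((n + 1) ^ 2)

/-- `pH k σ m τ` is the `m`-step transition probability
`P(Π^H_{k+m} = τ | Π^H_k = σ)` of the double-insertion Markov chain. -/
def pH (k : ℕ) (σ : Equiv.Perm (Fin k)) : (m : ℕ) → Equiv.Perm (Fin (k + m)) → ℚ
  | 0, τ => if σ = τ then 1 else 0
  | m + 1, τ => ∑ ρ : Equiv.Perm (Fin (k + m)), pH k σ m ρ * pstepH ρ τ

/-!
A step of `Π^H` is determined by the position `I` alone once its target `τ` is fixed: `J` must be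
`τ I` and the source must be `τ` with position `I` deleted. Hence one step maps a function `F` of
the source to the average of `F` over the `n + 1` deletions from `τ`, divided by `n + 1`. Deleting a
uniform position preserves the expected pattern density, since a fixed occurrence of `σ` in `τ`
survives exactly the `n + 1 - k` deletions avoiding it. So `t(σ, ·)` is multiplied by `1 / (n + 1)`
at each step, and induction from `t(σ, τ) = [σ = τ]` in `S_k` gives the factor `k! / n!`.
-/

open Finset

/-- The permutation of `Fin n` obtained from `τ` by deleting position `I` and the value `τ I`. -/
def deletePerm {n : ℕ} (τ : Equiv.Perm (Fin (n + 1))) (I : Fin (n + 1)) :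
    Equiv.Perm (Fin n) :=
  Equiv.removeNone (((finSuccEquiv' I).symm.trans τ).trans (finSuccEquiv' (τ I)))

section Insertion

variable {n : ℕ}

lemma succAbove_deletePerm (τ : Equiv.Perm (Fin (n + 1))) (I : Fin (n + 1)) (x : Fin n) :
    (τ I).succAbove (deletePerm τ I x) = τ (I.succAbove x) := by
  obtain ⟨z, hz⟩ : ∃ z, (τ I).succAbove z = τ (I.succAbove x) :=
    Fin.exists_succAbove_eq (by simp [τ.injective.ne_iff, Fin.succAbove_ne])
  have h : (((finSuccEquiv' I).symm.trans τ).trans (finSuccEquiv' (τ I))) (some x) = some z := by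
    simp [← hz]
  have hdel := Equiv.removeNone_some _ ⟨z, h⟩
  rw [h] at hdel
  rw [deletePerm, Option.some_inj.mp hdel, hz]

@[simp]
lemma insertPerm_apply_self (ρ : Equiv.Perm (Fin n)) (I J : Fin (n + 1)) :
    insertPerm ρ I J I = J := by
  simp [insertPerm]

@[simp]
lemma insertPerm_apply_succAbove (ρ : Equiv.Perm (Fin n)) (I J : Fin (n + 1)) (x : Fin n) :
    insertPerm ρ I J (I.succAbove x) = J.succAbove (ρ x) := by
  simp [insertPerm]

lemma insertPerm_eq_iff (ρ : Equiv.Perm (Fin n)) (I J : Fin (n + 1))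
    (τ : Equiv.Perm (Fin (n + 1))) :
    insertPerm ρ I J = τ ↔ J = τ I ∧ ρ = deletePerm τ I := by
  constructor
  · rintro rfl
    refine ⟨(insertPerm_apply_self ρ I J).symm, Equiv.ext fun x => ?_⟩
    apply Fin.succAbove_right_injective (p := J)
    simpa using (succAbove_deletePerm (insertPerm ρ I J) I x).symm
  · rintro ⟨rfl, rfl⟩
    ext x : 1
    rcases eq_or_ne x I with rfl | hx
    · exact insertPerm_apply_self _ _ _
    · obtain ⟨y, rfl⟩ := Fin.exists_succAbove_eq hx
      rw [insertPerm_apply_succAbove, succAbove_deletePerm]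

lemma card_insertPerm_eq (ρ : Equiv.Perm (Fin n)) (τ : Equiv.Perm (Fin (n + 1))) :
    #{p : Fin (n + 1) × Fin (n + 1) | insertPerm ρ p.1 p.2 = τ} = #{I | deletePerm τ I = ρ} := by
  refine card_bij' (fun p _ => p.1) (fun I _ => (I, τ I)) ?_ ?_ ?_ (fun _ _ => rfl)
  · intro p hp
    simp only [mem_filter, mem_univ, true_and] at hp ⊢
    exact ((insertPerm_eq_iff _ _ _ _).mp hp).2.symm
  · intro I hI
    simp only [mem_filter, mem_univ, true_and] at hI ⊢
    exact (insertPerm_eq_iff _ _ _ _).mpr ⟨rfl, hI.symm⟩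
  · rintro ⟨I, J⟩ hp
    simp only [mem_filter, mem_univ, true_and] at hp
    simp [((insertPerm_eq_iff _ _ _ _).mp hp).1]

lemma sum_mul_pstepH (F : Equiv.Perm (Fin n) → ℚ) (τ : Equiv.Perm (Fin (n + 1))) :
    ∑ ρ, F ρ * pstepH ρ τ = (∑ I, F (deletePerm τ I)) / ((n + 1) ^ 2) := by
  rw [← Finset.sum_fiberwise' univ (deletePerm τ), sum_div]
  refine sum_congr rfl fun ρ _ => ?_
  rw [pstepH, card_insertPerm_eq, sum_const, nsmul_eq_mul]
  ring

end Insertion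

section Patterns

variable {k n : ℕ}

def patOccurrences (σ : Equiv.Perm (Fin k)) (π : Equiv.Perm (Fin n)) : Finset (Fin k → Fin n) :=
  {f | (∀ i j : Fin k, i < j → f i < f j) ∧ (∀ i j : Fin k, σ i < σ j ↔ π (f i) < π (f j))}

lemma patFreq_eq_card_div (σ : Equiv.Perm (Fin k)) (π : Equiv.Perm (Fin n)) :
    patFreq σ π = #(patOccurrences σ π) / n.choose k := rfl

lemma mem_patOccurrences {σ : Equiv.Perm (Fin k)} {π : Equiv.Perm (Fin n)} {f : Fin k → Fin n} :
    f ∈ patOccurrences σ π ↔ StrictMono f ∧ ∀ i j, σ i < σ j ↔ π (f i) < π (f j) := by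
  simp [patOccurrences, StrictMono]

lemma Equiv.Perm.eq_of_forall_lt_iff_lt {σ τ : Equiv.Perm (Fin k)}
    (h : ∀ i j, σ i < σ j ↔ τ i < τ j) : σ = τ := by
  have hmono : StrictMono (τ ∘ σ.symm) := fun a b hab =>
    (h (σ.symm a) (σ.symm b)).mp (by simpa using hab)
  ext x : 1
  simpa using (congrFun hmono.eq_id (σ x)).symm

lemma patFreq_eq_ite (σ τ : Equiv.Perm (Fin k)) : patFreq σ τ = if σ = τ then 1 else 0 := by
  have hocc : patOccurrences σ τ = if σ = τ then {id} else ∅ := by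
    ext f
    simp only [mem_patOccurrences]
    split_ifs with hστ
    · subst hστ
      exact ⟨fun h => mem_singleton.mpr h.1.eq_id,
        fun h => by rw [mem_singleton.mp h]; exact ⟨strictMono_id, fun _ _ => Iff.rfl⟩⟩
    · refine ⟨fun ⟨hf, hpat⟩ => ?_, fun h => absurd h (notMem_empty f)⟩
      rw [hf.eq_id] at hpat
      exact absurd (Equiv.Perm.eq_of_forall_lt_iff_lt hpat) hστ
  rw [patFreq_eq_card_div, hocc, Nat.choose_self]
  split_ifs <;> simp

lemma card_patOccurrences_deletePerm (σ : Equiv.Perm (Fin k)) (τ : Equiv.Perm (Fin (n + 1)))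
    (I : Fin (n + 1)) :
    #(patOccurrences σ (deletePerm τ I)) = #{f ∈ patOccurrences σ τ | I ∉ Set.range f} := by
  have hpat (g : Fin k → Fin n) (i j : Fin k) :
      deletePerm τ I (g i) < deletePerm τ I (g j) ↔
        τ (I.succAbove (g i)) < τ (I.succAbove (g j)) := by
    rw [← succAbove_deletePerm, ← succAbove_deletePerm, Fin.succAbove_lt_succAbove_iff]
  refine card_bij (fun g _ => I.succAbove ∘ g) ?_ ?_ ?_
  · intro g hg
    rw [mem_patOccurrences] at hg
    simp only [mem_filter, mem_patOccurrences, Set.mem_range, not_exists]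
    exact ⟨⟨Fin.strictMono_succAbove I |>.comp hg.1, fun i j => (hg.2 i j).trans (hpat g i j)⟩,
      fun x => Fin.succAbove_ne I (g x)⟩
  · exact fun g₁ _ g₂ _ he => (Fin.succAbove_right_injective (p := I)).comp_left he
  · intro f hf
    simp only [mem_filter, mem_patOccurrences, Set.mem_range, not_exists] at hf
    obtain ⟨⟨hmono, hpatf⟩, havoid⟩ := hf
    choose g hg using fun j => Fin.exists_succAbove_eq (havoid j)
    have hfg : I.succAbove ∘ g = f := funext hg
    refine ⟨g, ?_, hfg⟩
    rw [← hfg] at hmono hpatf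
    exact mem_patOccurrences.mpr ⟨fun i j hij => (Fin.strictMono_succAbove I).lt_iff_lt.mp
      (hmono hij), fun i j => (hpatf i j).trans (hpat g i j).symm⟩

lemma sum_card_patOccurrences_deletePerm (σ : Equiv.Perm (Fin k))
    (τ : Equiv.Perm (Fin (n + 1))) :
    ∑ I, #(patOccurrences σ (deletePerm τ I)) = (n + 1 - k) * #(patOccurrences σ τ) := by
  have hmissed (f : Fin k → Fin (n + 1)) (hf : f ∈ patOccurrences σ τ) :
      #(univ.bipartiteBelow (fun I f => I ∉ Set.range f) f) = n + 1 - k := by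
    have hcompl : univ.bipartiteBelow (fun I f => I ∉ Set.range f) f = (univ.image f)ᶜ := by
      ext I; simp
    rw [hcompl, card_compl, card_image_of_injective _ (mem_patOccurrences.mp hf).1.injective]
    simp
  calc ∑ I, #(patOccurrences σ (deletePerm τ I))
      = ∑ I, #((patOccurrences σ τ).bipartiteAbove (fun I f => I ∉ Set.range f) I) :=
        sum_congr rfl fun I _ => card_patOccurrences_deletePerm σ τ I
    _ = ∑ f ∈ patOccurrences σ τ, #(univ.bipartiteBelow (fun I f => I ∉ Set.range f) f) :=
        sum_card_bipartiteAbove_eq_sum_card_bipartiteBelow _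
    _ = (n + 1 - k) * #(patOccurrences σ τ) := by
        rw [sum_congr rfl hmissed, sum_const, smul_eq_mul, mul_comm]

lemma sum_patFreq_deletePerm (hk : k ≤ n) (σ : Equiv.Perm (Fin k))
    (τ : Equiv.Perm (Fin (n + 1))) :
    ∑ I, patFreq σ (deletePerm τ I) = (n + 1) * patFreq σ τ := by
  have hchoose : ((n + 1 - k : ℕ) : ℚ) * (n + 1).choose k = (n + 1) * n.choose k := by
    exact_mod_cast calc (n + 1 - k) * (n + 1).choose k
        = (n + 1).choose (k + 1) * (k + 1) := by rw [mul_comm, Nat.choose_succ_right_eq]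
      _ = (n + 1) * n.choose k := (Nat.add_one_mul_choose_eq n k).symm
  have hpos : (0 : ℚ) < n.choose k := by exact_mod_cast Nat.choose_pos hk
  have hpos' : (0 : ℚ) < (n + 1).choose k := by exact_mod_cast Nat.choose_pos (by omega)
  simp_rw [patFreq_eq_card_div, ← sum_div]
  rw [← Nat.cast_sum, sum_card_patOccurrences_deletePerm, Nat.cast_mul]
  field_simp
  linear_combination (#(patOccurrences σ τ) : ℚ) * hchoose

end Patterns

/-- The double-insertion chain `Π^H` has transition probabilities
`P(Π^H_n = τ | Π^H_k = σ) = (k!/n!) · t(σ, τ)` for all `k ≤ n` (here `n = k + m`). -/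
theorem pH_eq_patFreq (k m : ℕ) (σ : Equiv.Perm (Fin k))
    (τ : Equiv.Perm (Fin (k + m))) :
    pH k σ m τ = ((Nat.factorial k : ℚ) / (Nat.factorial (k + m))) * patFreq σ τ := by
  induction m with
  | zero =>
    have hfact : (k.factorial : ℚ) ≠ 0 := by positivity
    simp [pH, patFreq_eq_ite, hfact]
  | succ m ih =>
    have hfact : ((k + m).factorial : ℚ) ≠ 0 := by positivity
    calc pH k σ (m + 1) τ
        = ∑ ρ : Equiv.Perm (Fin (k + m)),
            (k.factorial / (k + m).factorial * patFreq σ ρ) * pstepH ρ τ := by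
          simp only [pH, ih]
      _ = k.factorial / (k + m).factorial * ((k + m + 1) * patFreq σ τ) / (k + m + 1) ^ 2 := by
          rw [sum_mul_pstepH, ← mul_sum, sum_patFreq_deletePerm (Nat.le_add_right k m)]
          push_cast; ring
      _ = k.factorial / (k + (m + 1)).factorial * patFreq σ τ := by
          rw [show (k + (m + 1)).factorial = (k + m + 1) * (k + m).factorial from
            Nat.factorial_succ _]
          push_cast
          field_simp
end

section
/- Under independence, the conditional probability that three i.i.d. uniform points on the unit square realize the identity pattern 123 given the first point is (x,y) equals 2x(1−x)y(1−y) + x²y²/2 + (1−x)²(1−y)²/2. -/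
/-!
Write `(a₂, a₃)` for the first and `(b₂, b₃)` for the second coordinates of the two random
points. The pattern is `123` exactly when the relative order of `x, a₂, a₃` is the same as that
of `y, b₂, b₃`. The pairs `(a₂, a₃)` and `(b₂, b₃)` are independent, so the probability is
`∑ τ, P(type of (x, a₂, a₃) = τ) * P(type of (y, b₂, b₃) = τ)` over the six possible order
types. Relative to `u ∈ [0, 1]`, each type of a uniform pair has probability `u² / 2`,
`u (1 - u)` or `(1 - u)² / 2`, computed by integrating out one coordinate of the pair.
-/

open MeasureTheory

noncomputable def unif01 : Measure ℝ := volume.restrict (Set.Icc (0 : ℝ) 1)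

open Set

section ProductMeasure

variable {α β γ δ : Type*} [MeasurableSpace α] [MeasurableSpace β] [MeasurableSpace γ]
  [MeasurableSpace δ]

theorem MeasureTheory.measurePreserving_prodProdProdComm (μa : Measure α) (μb : Measure β)
    (μc : Measure γ) (μd : Measure δ) [SFinite μa] [SFinite μb] [SFinite μc] [SFinite μd] :
    MeasurePreserving (fun p : (α × β) × γ × δ => ((p.1.1, p.2.1), (p.1.2, p.2.2)))
      ((μa.prod μb).prod (μc.prod μd)) ((μa.prod μc).prod (μb.prod μd)) :=
  (measurePreserving_prodAssoc μa μc (μb.prod μd)).symm _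
    |>.comp <| ((MeasurePreserving.id μa).prod (measurePreserving_prodAssoc μc μb μd))
    |>.comp <| ((MeasurePreserving.id μa).prod
      ((Measure.measurePreserving_swap (μ := μb) (ν := μc)).prod (.id μd)))
    |>.comp <| ((MeasurePreserving.id μa).prod ((measurePreserving_prodAssoc μb μc μd).symm _))
    |>.comp <| measurePreserving_prodAssoc μa μb (μc.prod μd)

theorem MeasureTheory.Measure.prod_setOf_apply_eq_apply {ι : Type*} [MeasurableSpace ι]
    [MeasurableSingletonClass ι] [Countable ι] (μ : Measure α) (ν : Measure β) [SFinite ν]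
    {f : α → ι} {g : β → ι} (hf : Measurable f) (hg : Measurable g) :
    μ.prod ν {p | f p.1 = g p.2} = ∑' i, μ (f ⁻¹' {i}) * ν (g ⁻¹' {i}) := by
  have hunion : {p : α × β | f p.1 = g p.2} = ⋃ i, (f ⁻¹' {i}) ×ˢ (g ⁻¹' {i}) := by
    ext p; simp [eq_comm]
  rw [hunion, measure_iUnion]
  · simp_rw [Measure.prod_prod]
  · exact fun i j hij => Set.disjoint_left.2 fun p hi hj => hij (hi.1.symm.trans hj.1)
  · exact fun i => (hf (measurableSet_singleton i)).prod (hg (measurableSet_singleton i))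

end ProductMeasure

section Uniform

instance : IsProbabilityMeasure unif01 := ⟨by simp [unif01]⟩

lemma ae_mem_Icc_unif01 : ∀ᵐ a ∂unif01, a ∈ Icc (0 : ℝ) 1 := ae_restrict_mem measurableSet_Icc

lemma unif01_of_subset {s : Set ℝ} (hs : s ⊆ Icc 0 1) : unif01 s = volume s :=
  Measure.restrict_eq_self _ hs

lemma Iic_inter_Icc_zero_one {u : ℝ} (hu : u ≤ 1) : Iic u ∩ Icc 0 1 = Icc 0 u := by
  ext a
  simp only [mem_inter_iff, mem_Iic, mem_Icc]
  exact ⟨fun h => ⟨h.2.1, h.1⟩, fun h => ⟨h.2, h.1, h.2.trans hu⟩⟩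

variable {u : ℝ}

lemma unif01_Iic (hu : u ∈ Icc (0 : ℝ) 1) : unif01 (Iic u) = ENNReal.ofReal u := by
  rw [unif01, Measure.restrict_apply measurableSet_Iic, Iic_inter_Icc_zero_one hu.2,
    Real.volume_Icc, sub_zero]

lemma unif01_Ioi (hu : u ∈ Icc (0 : ℝ) 1) : unif01 (Ioi u) = ENNReal.ofReal (1 - u) := by
  rw [← compl_Iic, prob_compl_eq_one_sub measurableSet_Iic, unif01_Iic hu,
    ENNReal.ofReal_sub _ hu.1, ENNReal.ofReal_one]

lemma measurePreserving_one_sub_unif01 :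
    MeasurePreserving (fun a : ℝ => 1 - a) unif01 unif01 := by
  rw [unif01]
  simpa [preimage_const_sub_Icc] using
    (Measure.measurePreserving_sub_left volume (1 : ℝ)).restrict_preimage
      (measurableSet_Icc (a := 0) (b := 1))

lemma lintegral_unif01_ofReal_sub (hu : u ∈ Icc (0 : ℝ) 1) :
    ∫⁻ a, ENNReal.ofReal (u - a) ∂unif01 = ENNReal.ofReal (u ^ 2 / 2) := by
  have hsupp : Function.support (fun a => ENNReal.ofReal (u - a)) ⊆ Iic u := fun a ha => by
    by_contra h
    exact ha (ENNReal.ofReal_of_nonpos (by linarith [not_le.1 (mt mem_Iic.2 h)]))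
  rw [unif01, ← setLIntegral_eq_of_support_subset hsupp,
    Measure.restrict_restrict measurableSet_Iic, Iic_inter_Icc_zero_one hu.2,
    ← ofReal_integral_eq_lintegral_ofReal]
  · rw [integral_Icc_eq_integral_Ioc, ← intervalIntegral.integral_of_le hu.1,
      intervalIntegral.integral_sub intervalIntegrable_const
        intervalIntegral.intervalIntegrable_id,
      integral_id, intervalIntegral.integral_const, smul_eq_mul]
    ring_nf
  · exact (continuous_const.sub continuous_id).integrableOn_Icc
  · filter_upwards [ae_restrict_mem measurableSet_Icc] with a ha
    simpa using ha.2

lemma lintegral_unif01_ofReal_sub_right (hu : u ∈ Icc (0 : ℝ) 1) :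
    ∫⁻ a, ENNReal.ofReal (a - u) ∂unif01 = ENNReal.ofReal ((1 - u) ^ 2 / 2) := by
  rw [← measurePreserving_one_sub_unif01.lintegral_comp (by fun_prop)]
  simp_rw [sub_right_comm (1 : ℝ)]
  exact lintegral_unif01_ofReal_sub ⟨by linarith [hu.2], by linarith [hu.1]⟩

lemma unif01_prod_setOf_fst_lt_snd_le (hu : u ∈ Icc (0 : ℝ) 1) :
    (unif01.prod unif01) {a | a.1 < a.2 ∧ a.2 ≤ u} = ENNReal.ofReal (u ^ 2 / 2) := by
  rw [Measure.prod_apply, ← lintegral_unif01_ofReal_sub hu]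
  · refine lintegral_congr_ae (ae_mem_Icc_unif01.mono fun a ha => ?_)
    change unif01 (Ioc a u) = _
    rw [unif01_of_subset (Ioc_subset_Icc_self.trans (Icc_subset_Icc ha.1 hu.2)),
      Real.volume_Ioc]
  · exact (measurableSet_lt measurable_fst measurable_snd).inter
      (measurableSet_le measurable_snd measurable_const)

lemma unif01_prod_setOf_snd_le_fst_le (hu : u ∈ Icc (0 : ℝ) 1) :
    (unif01.prod unif01) {a | a.2 ≤ a.1 ∧ a.1 ≤ u} = ENNReal.ofReal (u ^ 2 / 2) := by
  rw [Measure.prod_apply_symm, ← lintegral_unif01_ofReal_sub hu]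
  · refine lintegral_congr_ae (ae_mem_Icc_unif01.mono fun a ha => ?_)
    change unif01 (Icc a u) = _
    rw [unif01_of_subset (Icc_subset_Icc ha.1 hu.2), Real.volume_Icc]
  · exact (measurableSet_le measurable_snd measurable_fst).inter
      (measurableSet_le measurable_fst measurable_const)

lemma unif01_prod_setOf_lt_snd_le_fst (hu : u ∈ Icc (0 : ℝ) 1) :
    (unif01.prod unif01) {a | u < a.2 ∧ a.2 ≤ a.1} = ENNReal.ofReal ((1 - u) ^ 2 / 2) := by
  rw [Measure.prod_apply, ← lintegral_unif01_ofReal_sub_right hu]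
  · refine lintegral_congr_ae (ae_mem_Icc_unif01.mono fun a ha => ?_)
    change unif01 (Ioc u a) = _
    rw [unif01_of_subset (Ioc_subset_Icc_self.trans (Icc_subset_Icc hu.1 ha.2)),
      Real.volume_Ioc]
  · exact (measurableSet_lt measurable_const measurable_snd).inter
      (measurableSet_le measurable_snd measurable_fst)

lemma unif01_prod_setOf_lt_fst_lt_snd (hu : u ∈ Icc (0 : ℝ) 1) :
    (unif01.prod unif01) {a | u < a.1 ∧ a.1 < a.2} = ENNReal.ofReal ((1 - u) ^ 2 / 2) := by
  rw [Measure.prod_apply_symm, ← lintegral_unif01_ofReal_sub_right hu]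
  · refine lintegral_congr_ae (ae_mem_Icc_unif01.mono fun a ha => ?_)
    change unif01 (Ioo u a) = _
    rw [unif01_of_subset (Ioo_subset_Icc_self.trans (Icc_subset_Icc hu.1 ha.2)),
      Real.volume_Ioo]
  · exact (measurableSet_lt measurable_const measurable_fst).inter
      (measurableSet_lt measurable_fst measurable_snd)

end Uniform

section OrderType

noncomputable def orderType (u : ℝ) (a : ℝ × ℝ) : Bool × Bool × Bool :=
  (decide (u < a.1), decide (u < a.2), decide (a.1 < a.2))

@[fun_prop]
lemma measurable_orderType (u : ℝ) : Measurable (orderType u) := by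
  refine .prodMk ?_ (.prodMk ?_ ?_) <;> refine measurable_to_bool ?_ <;>
    simp only [preimage, mem_singleton_iff, decide_eq_true_eq]
  · exact measurableSet_lt measurable_const measurable_fst
  · exact measurableSet_lt measurable_const measurable_snd
  · exact measurableSet_lt measurable_fst measurable_snd

/-- The types `(false, true, false)` and `(true, false, true)` are never realized. -/
noncomputable def orderTypeProb (u : ℝ) : Bool × Bool × Bool → ℝ
  | (false, false, _) => u ^ 2 / 2
  | (true, true, _) => (1 - u) ^ 2 / 2
  | (false, true, true) | (true, false, false) => u * (1 - u)
  | _ => 0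

variable {u : ℝ}

lemma orderTypeProb_nonneg (hu : u ∈ Icc (0 : ℝ) 1) (t : Bool × Bool × Bool) :
    0 ≤ orderTypeProb u t := by
  unfold orderTypeProb
  split <;> nlinarith [hu.1, hu.2]

lemma unif01_prod_orderType_preimage (hu : u ∈ Icc (0 : ℝ) 1) (t : Bool × Bool × Bool) :
    (unif01.prod unif01) (orderType u ⁻¹' {t}) = ENNReal.ofReal (orderTypeProb u t) := by
  obtain ⟨_ | _, _ | _, _ | _⟩ := t <;> simp only [orderTypeProb]
  case false.false.false =>
    rw [← unif01_prod_setOf_snd_le_fst_le hu]; congr 1; ext a; grind [orderType]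
  case false.false.true =>
    rw [← unif01_prod_setOf_fst_lt_snd_le hu]; congr 1; ext a; grind [orderType]
  case true.true.false =>
    rw [← unif01_prod_setOf_lt_snd_le_fst hu]; congr 1; ext a; grind [orderType]
  case true.true.true =>
    rw [← unif01_prod_setOf_lt_fst_lt_snd hu]; congr 1; ext a; grind [orderType]
  case false.true.true =>
    rw [show orderType u ⁻¹' {(false, true, true)} = Iic u ×ˢ Ioi u by
        ext a; grind [orderType],
      Measure.prod_prod, unif01_Iic hu, unif01_Ioi hu, ENNReal.ofReal_mul hu.1]
  case true.false.false =>
    rw [show orderType u ⁻¹' {(true, false, false)} = Ioi u ×ˢ Iic u by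
        ext a; grind [orderType],
      Measure.prod_prod, unif01_Iic hu, unif01_Ioi hu, ENNReal.ofReal_mul hu.1, mul_comm]
  all_goals
    rw [ENNReal.ofReal_zero, ← measure_empty (μ := unif01.prod unif01)]
    congr 1; ext a; grind [orderType]

end OrderType

/-- Under independence, the conditional probability that three i.i.d.
uniform points on the unit square realize the identity pattern `123`, given that the
first point is `(x, y)`, equals `2x(1−x)y(1−y) + x²y²/2 + (1−x)²(1−y)²/2`. The other
two points `((X₂,Y₂),(X₃,Y₃))` are distributed according to the product of uniform
distributions; the pattern is `123` iff all three pairs of points are concordant. -/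
theorem phi_123_formula (x y : ℝ) (hx : x ∈ Set.Icc (0 : ℝ) 1)
    (hy : y ∈ Set.Icc (0 : ℝ) 1) :
    ((unif01.prod unif01).prod (unif01.prod unif01))
        {p : (ℝ × ℝ) × (ℝ × ℝ) |
          (x < p.1.1 ↔ y < p.1.2) ∧ (x < p.2.1 ↔ y < p.2.2) ∧
            (p.1.1 < p.2.1 ↔ p.1.2 < p.2.2)} =
      ENNReal.ofReal
        (2 * x * (1 - x) * y * (1 - y) + x ^ 2 * y ^ 2 / 2 +
          (1 - x) ^ 2 * (1 - y) ^ 2 / 2) := by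
  have hpattern : {p : (ℝ × ℝ) × (ℝ × ℝ) |
        (x < p.1.1 ↔ y < p.1.2) ∧ (x < p.2.1 ↔ y < p.2.2) ∧ (p.1.1 < p.2.1 ↔ p.1.2 < p.2.2)} =
      (fun p : (ℝ × ℝ) × (ℝ × ℝ) => ((p.1.1, p.2.1), (p.1.2, p.2.2))) ⁻¹'
        {q | orderType x q.1 = orderType y q.2} := by
    ext p; simp [orderType]
  have hmeas : MeasurableSet {q : (ℝ × ℝ) × (ℝ × ℝ) | orderType x q.1 = orderType y q.2} :=
    measurableSet_eq_fun (by fun_prop) (by fun_prop)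
  rw [hpattern, (measurePreserving_prodProdProdComm unif01 unif01 unif01 unif01).measure_preimage
      hmeas.nullMeasurableSet,
    Measure.prod_setOf_apply_eq_apply _ _ (measurable_orderType x) (measurable_orderType y),
    tsum_fintype]
  simp_rw [unif01_prod_orderType_preimage hx, unif01_prod_orderType_preimage hy,
    ← ENNReal.ofReal_mul (orderTypeProb_nonneg hx _)]
  rw [← ENNReal.ofReal_sum_of_nonneg fun t _ =>
    mul_nonneg (orderTypeProb_nonneg hx t) (orderTypeProb_nonneg hy t)]
  congr 1
  simp only [orderTypeProb, Fintype.sum_prod_type, Fintype.univ_bool, Finset.mem_singleton,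
    Bool.true_eq_false, not_false_eq_true, Finset.sum_insert, Finset.sum_singleton, mul_zero,
    zero_add, add_zero]
  ring
end
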